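/- Assume GRH. There is an absolute constant C>0 such that for all integers q ≥ 1, all integers a with gcd(a,q)=1, all real x ≥ 2 and all U ≥ 0: ∫_{x}^{2x} |Σ(t,U,0)|² dt ≤ C·x·F_q(x,U). -/

import Mathlib

open Complex MeasureTheory
open scoped Classical

noncomputable section

def zmult {q : ℕ} (χ : DirichletCharacter ℂ q) (γ : ℝ) : ℕ :=
  if hq : q = 0 then 0
  else
    haveI : NeZero q := ⟨hq⟩
    if h : AnalyticAt ℂ (DirichletCharacter.LFunction χ) (1 / 2 + γ * Complex.I)
    then (analyticOrderAt (DirichletCharacter.LFunction χ) (1 / 2 + γ * Complex.I)).toNat else 0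

def GRH : Prop :=
  ∀ (q : ℕ) [NeZero q] (χ : DirichletCharacter ℂ q) (s : ℂ),
    DirichletCharacter.LFunction χ s = 0 → 0 < s.re → s.re < 1 → s.re = 1 / 2

def Wt (u : ℝ) : ℝ := 4 / (4 + u ^ 2)

def Gpair {q : ℕ} (χ₁ χ₂ : DirichletCharacter ℂ q) (x T : ℝ) : ℂ :=
  ∑' p : ℝ × ℝ,
    if |p.1| ≤ T ∧ |p.2| ≤ T then
      ((zmult χ₁ p.1 * zmult χ₂ p.2 : ℕ) : ℂ) *
        (x : ℂ) ^ (Complex.I * ((p.1 - p.2 : ℝ) : ℂ)) * ((Wt (p.1 - p.2) : ℝ) : ℂ)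
    else 0

def Fq (q a : ℕ) (x T : ℝ) : ℂ :=
  if hq : q = 0 then 0
  else
    haveI : NeZero q := ⟨hq⟩
    haveI : Fintype (DirichletCharacter ℂ q) := Fintype.ofFinite _
    ∑ χ₁ : DirichletCharacter ℂ q, ∑ χ₂ : DirichletCharacter ℂ q,
      (starRingEnd ℂ) (χ₁ (a : ZMod q)) * χ₂ (a : ZMod q) * Gpair χ₁ χ₂ x T

def psi (x : ℝ) (q a : ℕ) : ℝ :=
  ∑ n ∈ Finset.Icc 1 ⌊x⌋₊,
    if (n : ZMod q) = (a : ZMod q) then ArithmeticFunction.vonMangoldt n else 0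

/-- `S(x) = x⁻² Σ_{n≤x, n≡a} n Λ(n)² + x² Σ_{n>x, n≡a} Λ(n)²/n³`. -/
def Sfun (q a : ℕ) (x : ℝ) : ℝ :=
  (1 / x ^ 2) * (∑ n ∈ Finset.Icc 1 ⌊x⌋₊,
      if (n : ZMod q) = (a : ZMod q) then (n : ℝ) * (ArithmeticFunction.vonMangoldt n) ^ 2 else 0)
  + x ^ 2 * ∑' n : ℕ,
      (if x < (n : ℝ) ∧ (n : ZMod q) = (a : ZMod q)
       then (ArithmeticFunction.vonMangoldt n) ^ 2 / (n : ℝ) ^ 3 else 0)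

/-- `R₁(x,t)`. -/
def R1 (q a : ℕ) (x t : ℝ) : ℂ :=
  -((Nat.totient q : ℂ) / ((Real.sqrt x : ℝ) : ℂ)) *
    ((∑ n ∈ Finset.Icc 1 ⌊x⌋₊,
        if (n : ZMod q) = (a : ZMod q) then
          ((ArithmeticFunction.vonMangoldt n : ℝ) : ℂ) *
            ((x / n : ℝ) : ℂ) ^ ((-(1 / 2) : ℂ) + (t : ℂ) * Complex.I)
        else 0)
      + ∑' n : ℕ,
        (if x < (n : ℝ) ∧ (n : ZMod q) = (a : ZMod q) then
          ((ArithmeticFunction.vonMangoldt n : ℝ) : ℂ) *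
            ((x / n : ℝ) : ℂ) ^ (((3 / 2) : ℂ) + (t : ℂ) * Complex.I)
        else 0))

/-- `Σ(x,T,v) = Σ_χ conj(χ(a)) Σ_{|γ|≤T} x^{iγ} e^{ivγ}`. -/
def Sig (q a : ℕ) (x T v : ℝ) : ℂ :=
  if hq : q = 0 then 0
  else
    haveI : NeZero q := ⟨hq⟩
    haveI : Fintype (DirichletCharacter ℂ q) := Fintype.ofFinite _
    ∑ χ : DirichletCharacter ℂ q, (starRingEnd ℂ) (χ (a : ZMod q)) *
      ∑' γ : ℝ,
        (if |γ| ≤ T then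
          ((zmult χ γ : ℕ) : ℂ) * (x : ℂ) ^ (Complex.I * (γ : ℂ)) *
            Complex.exp (Complex.I * (v : ℂ) * (γ : ℂ))
        else 0)

/-- `Σ_χ conj(χ(a)) Σ_{|γ|≤Z} x^{1/2+iγ}/(1/2+iγ)`. -/
def Zsum (q a : ℕ) (x Z : ℝ) : ℂ :=
  if hq : q = 0 then 0
  else
    haveI : NeZero q := ⟨hq⟩
    haveI : Fintype (DirichletCharacter ℂ q) := Fintype.ofFinite _
    ∑ χ : DirichletCharacter ℂ q, (starRingEnd ℂ) (χ (a : ZMod q)) *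
      ∑' γ : ℝ,
        (if |γ| ≤ Z then
          ((zmult χ γ : ℕ) : ℂ) * (x : ℂ) ^ ((1 / 2 : ℂ) + (γ : ℂ) * Complex.I) /
            ((1 / 2 : ℂ) + (γ : ℂ) * Complex.I)
        else 0)

/-- `I(x,q,T) = (1/φ(q)) Σ_χ conj(χ(a)) Σ_{|γ|≤T} x^{1/2+iγ}/(1/2+iγ)`. -/
def Ifun (x : ℝ) (q a : ℕ) (T : ℝ) : ℂ :=
  ((Nat.totient q : ℂ))⁻¹ * Zsum q a x T

/-- The pair correlation conjecture at level `ε'`. -/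
def PairCorrConj (ε' : ℝ) : Prop :=
  ∃ C' > 0, ∃ x₀' : ℝ, ∀ x : ℝ, x₀' ≤ x →
    ∀ q : ℕ, 1 ≤ q → (q : ℝ) ≤ x ^ (1 - ε') →
    ∀ a : ℕ, Nat.gcd a q = 1 →
    ∀ T : ℝ, x ^ ε' ≤ T → T < x →
    ‖Fq q a x T‖ ≤ C' * (Nat.totient q : ℝ) * T * x ^ ε'

/-- The weak pair correlation conjecture at level `ε'` with weight `g`. -/
def WeakPairCorrConj (g : ℕ → ℝ) (ε' : ℝ) : Prop :=
  ∃ C' > 0, ∃ x₀' : ℝ, ∀ x : ℝ, x₀' ≤ x →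
    ∀ q : ℕ, 1 ≤ q → (q : ℝ) ≤ x ^ (1 - ε') →
    ∀ a : ℕ, Nat.gcd a q = 1 →
    ∀ T : ℝ, x ^ ε' ≤ T → T < x →
    ‖Fq q a x T‖ ≤ C' * (Nat.totient q : ℝ) * g q * T * x ^ ε'

section Helpers
open Real Set

lemma LF_analyticAt {q : ℕ} [NeZero q] (χ : DirichletCharacter ℂ q) {s : ℂ} (hs : s ≠ 1) :
    AnalyticAt ℂ (DirichletCharacter.LFunction χ) s := by
  have h : DifferentiableOn ℂ (DirichletCharacter.LFunction χ) ({1}ᶜ : Set ℂ) := fun w hw =>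
    (DirichletCharacter.differentiableAt_LFunction χ w (Or.inl hw)).differentiableWithinAt
  exact (h.analyticOnNhd isOpen_compl_singleton) s hs

lemma zmult_ne_zero_imp {q : ℕ} [NeZero q] {χ : DirichletCharacter ℂ q} {γ : ℝ}
    (h : zmult χ γ ≠ 0) :
    DirichletCharacter.LFunction χ (1 / 2 + γ * Complex.I) = 0 := by
  have hq : q ≠ 0 := NeZero.ne q
  have hs : (1 / 2 + γ * Complex.I : ℂ) ≠ 1 := by
    intro hco
    have := congrArg Complex.re hco
    simp at this
  have ha := LF_analyticAt χ hs
  rw [zmult, dif_neg hq, dif_pos ha] at h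
  by_contra hf
  have h1 : analyticOrderAt (DirichletCharacter.LFunction χ) (1 / 2 + γ * Complex.I) ≠ ⊤ := by
    intro htop
    exact hf ((analyticOrderAt_eq_top.mp htop).self_of_nhds)
  have h2 : analyticOrderAt (DirichletCharacter.LFunction χ) (1 / 2 + γ * Complex.I) = ((analyticOrderAt (DirichletCharacter.LFunction χ) (1 / 2 + γ * Complex.I)).toNat : ℕ∞) := (ENat.coe_toNat h1).symm
  obtain ⟨g, _, _, hev⟩ := ha.analyticOrderAt_eq_natCast.mp h2
  have := hev.self_of_nhds
  rw [sub_self, zero_pow h, zero_smul] at this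
  exact hf this

lemma finite_supp {q : ℕ} [NeZero q] (χ : DirichletCharacter ℂ q) (U : ℝ) :
    {γ : ℝ | |γ| ≤ U ∧ zmult χ γ ≠ 0}.Finite := by
  set S := {γ : ℝ | |γ| ≤ U ∧ zmult χ γ ≠ 0} with hS
  by_contra hinf
  have hinf' : S.Infinite := hinf
  set p : ℝ → ℂ := fun γ => 1 / 2 + γ * Complex.I with hp
  have hpinj : Function.Injective p := by
    intro a b hab
    have := congrArg Complex.im hab
    simpa [hp] using this
  have hTinf : (p '' S).Infinite := hinf'.image (hpinj.injOn)
  have hK : IsCompact (p '' Set.Icc (-U) U) := by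
    apply (isCompact_Icc).image
    fun_prop
  obtain ⟨z₀, hz₀K, hacc⟩ := hTinf.exists_accPt_of_subset_isCompact hK
    (Set.image_mono fun γ hγ => abs_le.mp hγ.1)
  have hz₀ : z₀ ≠ 1 := by
    obtain ⟨γ₀, _, rfl⟩ := hz₀K
    intro hco
    have := congrArg Complex.re hco
    simp [hp] at this
  -- frequently zero near z₀
  have hfreq : ∃ᶠ z in nhdsWithin z₀ {z₀}ᶜ, DirichletCharacter.LFunction χ z = 0 := by
    have h1 := accPt_iff_frequently.mp hacc
    rw [frequently_nhdsWithin_iff]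
    refine h1.mono ?_
    rintro z ⟨hzne, ⟨γ, hγS, rfl⟩⟩
    exact ⟨zmult_ne_zero_imp hγS.2, hzne⟩
  have hAn : AnalyticOnNhd ℂ (DirichletCharacter.LFunction χ) ({1}ᶜ : Set ℂ) :=
    fun s hs => LF_analyticAt χ hs
  have hpc : IsPreconnected ({1}ᶜ : Set ℂ) :=
    (isConnected_compl_singleton_of_one_lt_rank (rank_real_complex ▸ Nat.one_lt_ofNat) _)
      |>.isPreconnected
  have := hAn.eqOn_zero_of_preconnected_of_frequently_eq_zero hpc hz₀ hfreq
    (show (2 : ℂ) ∈ ({1}ᶜ : Set ℂ) by norm_num)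
  exact DirichletCharacter.LFunction_ne_zero_of_one_le_re χ (Or.inr (by norm_num))
    (by norm_num) this

lemma integrableOn_cexp_Ioi {c : ℂ} (hc : c.re < 0) :
    IntegrableOn (fun v : ℝ => Complex.exp (c * v)) (Set.Ioi 0) := by
  refine Integrable.mono' (exp_neg_integrableOn_Ioi 0 (neg_pos.mpr hc)) ?_ ?_
  · exact (Complex.continuous_exp.comp (by fun_prop)).aestronglyMeasurable
  · filter_upwards with v
    rw [Complex.norm_exp]
    simp [neg_mul]

lemma integrableOn_comp_neg_Iic {g : ℝ → ℂ} (h : IntegrableOn g (Ici 0)) :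
    IntegrableOn (fun v => g (-v)) (Iic 0) := by
  rw [← Measure.map_neg_eq_self (volume : Measure ℝ)]
  have m : MeasurableEmbedding fun x : ℝ => -x := (Homeomorph.neg ℝ).measurableEmbedding
  rw [m.integrableOn_map_iff]
  simp_rw [Function.comp_def, neg_neg, neg_preimage, neg_Iic, neg_zero]
  exact h

lemma integrable_exp_neg_two_abs : Integrable (fun v : ℝ => Real.exp (-2 * |v|)) := by
  have h1 : IntegrableOn (fun v : ℝ => Real.exp (-2 * |v|)) (Ioi 0) := by
    refine IntegrableOn.congr_fun (exp_neg_integrableOn_Ioi 0 (by norm_num : (0:ℝ) < 2)) ?_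
      measurableSet_Ioi
    intro v hv
    simp [abs_of_pos (mem_Ioi.mp hv)]
  have h2 : IntegrableOn (fun v : ℝ => Real.exp (-2 * |v|)) (Iic 0) := by
    rw [← Measure.map_neg_eq_self (volume : Measure ℝ)]
    have m : MeasurableEmbedding fun x : ℝ => -x := (Homeomorph.neg ℝ).measurableEmbedding
    rw [m.integrableOn_map_iff]
    simp_rw [Function.comp_def, abs_neg, neg_preimage, neg_Iic, neg_zero]
    exact Iff.mpr integrableOn_Ici_iff_integrableOn_Ioi h1
  have := h2.union h1
  rwa [Iic_union_Ioi, integrableOn_univ] at this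

lemma integral_cexp_Ioi {c : ℂ} (hc : c.re < 0) :
    ∫ v in Set.Ioi (0:ℝ), Complex.exp (c * v) = -c⁻¹ := by
  have hc0 : c ≠ 0 := fun h => by simp [h] at hc
  have hderiv : ∀ v ∈ Set.Ici (0:ℝ), HasDerivAt (fun v : ℝ => c⁻¹ * Complex.exp (c * v))
      (Complex.exp (c * v)) v := by
    intro v _
    have h1 : HasDerivAt (fun v : ℝ => ((v : ℂ))) 1 v := Complex.ofRealCLM.hasDerivAt
    have h3 := ((h1.const_mul c).cexp).const_mul c⁻¹
    rw [show c⁻¹ * (Complex.exp (c * v) * (c * 1)) = Complex.exp (c * v) by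
      field_simp] at h3
    exact h3
  have hlim : Filter.Tendsto (fun v : ℝ => c⁻¹ * Complex.exp (c * v)) Filter.atTop (nhds 0) := by
    rw [tendsto_zero_iff_norm_tendsto_zero]
    have : (fun v : ℝ => ‖c⁻¹ * Complex.exp (c * v)‖) = fun v => ‖c⁻¹‖ * Real.exp (c.re * v) := by
      funext v
      rw [norm_mul, Complex.norm_exp]
      congr 2
      simp
    rw [this, show (0:ℝ) = ‖c⁻¹‖ * 0 by ring]
    exact (Real.tendsto_exp_atBot.comp
      (Filter.Tendsto.const_mul_atTop_of_neg hc Filter.tendsto_id)).const_mul _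
  have := MeasureTheory.integral_Ioi_of_hasDerivAt_of_tendsto' hderiv (integrableOn_cexp_Ioi hc)
    hlim
  rw [this]
  simp

lemma integral_exp_abs_cexp (δ : ℝ) :
    ∫ v : ℝ, (Real.exp (-2 * |v|) : ℂ) * Complex.exp (Complex.I * δ * v) = ((Wt δ : ℝ) : ℂ) := by
  set f : ℝ → ℂ := fun v => (Real.exp (-2 * |v|) : ℂ) * Complex.exp (Complex.I * δ * v) with hf
  have hre1 : ((-2 : ℂ) + Complex.I * δ).re < 0 := by simp
  have hre2 : ((-2 : ℂ) - Complex.I * δ).re < 0 := by simp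
  have e1 : ∀ v ∈ Set.Ioi (0:ℝ), f v = Complex.exp (((-2 : ℂ) + Complex.I * δ) * v) := by
    intro v hv
    rw [hf]
    simp only [abs_of_pos (mem_Ioi.mp hv)]
    rw [add_mul, Complex.exp_add, Complex.ofReal_exp]
    congr 2
    push_cast
    ring
  have e2 : ∀ v ∈ Set.Iic (0:ℝ), f v
      = (fun w : ℝ => Complex.exp (((-2 : ℂ) - Complex.I * δ) * w)) (-v) := by
    intro v hv
    rw [hf]
    simp only [abs_of_nonpos (mem_Iic.mp hv)]
    rw [show ((-2 : ℂ) - Complex.I * δ) * ((-v : ℝ) : ℂ)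
        = ((-2 * (-v) : ℝ) : ℂ) + Complex.I * δ * v by push_cast; ring,
      Complex.exp_add, Complex.ofReal_exp]
  have hIoi : IntegrableOn f (Ioi 0) :=
    IntegrableOn.congr_fun (integrableOn_cexp_Ioi hre1) (fun v hv => (e1 v hv).symm)
      measurableSet_Ioi
  have hIic : IntegrableOn f (Iic 0) := by
    refine IntegrableOn.congr_fun
      (integrableOn_comp_neg_Iic (g := fun w : ℝ => Complex.exp (((-2 : ℂ) - Complex.I * δ) * w))
        (Iff.mpr integrableOn_Ici_iff_integrableOn_Ioi (integrableOn_cexp_Ioi hre2)))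
      (fun v hv => (e2 v hv).symm) measurableSet_Iic
  have hsplit := intervalIntegral.integral_Iic_add_Ioi (b := (0:ℝ)) hIic hIoi
  rw [← hsplit]
  have v1 : ∫ v in Iic (0:ℝ), f v = -((-2 : ℂ) - Complex.I * δ)⁻¹ := by
    rw [setIntegral_congr_fun measurableSet_Iic e2,
      integral_comp_neg_Iic 0 (fun w : ℝ => Complex.exp (((-2 : ℂ) - Complex.I * δ) * w)),
      neg_zero, integral_cexp_Ioi hre2]
  have v2 : ∫ v in Ioi (0:ℝ), f v = -((-2 : ℂ) + Complex.I * δ)⁻¹ := by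
    rw [setIntegral_congr_fun measurableSet_Ioi e1, integral_cexp_Ioi hre1]
  rw [v1, v2, Wt]
  have h4 : ((4 : ℝ) + δ ^ 2 : ℝ) ≠ 0 := by positivity
  have hne1 : ((-2 : ℂ) + Complex.I * δ) ≠ 0 := by
    intro h
    have := congrArg Complex.re h
    simp at this
  have hne2 : ((-2 : ℂ) - Complex.I * δ) ≠ 0 := by
    intro h
    have := congrArg Complex.re h
    simp at this
  have h4' : ((4 : ℂ) + (δ : ℂ) ^ 2) ≠ 0 := by
    intro h
    rw [show ((4 : ℂ) + (δ : ℂ) ^ 2) = ((4 + δ ^ 2 : ℝ) : ℂ) by push_cast; ring]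
      at h
    exact h4 (by exact_mod_cast h)
  push_cast
  field_simp
  ring_nf
  rw [Complex.I_sq]
  ring

lemma exp_combine (gi gj w₀ v : ℝ) :
    Complex.exp (Complex.I * gi * ((w₀ + v : ℝ) : ℂ)) *
      (starRingEnd ℂ) (Complex.exp (Complex.I * gj * ((w₀ + v : ℝ) : ℂ))) =
    Complex.exp (Complex.I * ((gi - gj : ℝ) : ℂ) * w₀) *
      Complex.exp (Complex.I * ((gi - gj : ℝ) : ℂ) * v) := by
  rw [← Complex.exp_conj, ← Complex.exp_add, ← Complex.exp_add]
  congr 1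
  simp only [map_mul, Complex.conj_I, Complex.conj_ofReal]
  push_cast
  ring

lemma base_integrable (δ : ℝ) : Integrable
    (fun v : ℝ => (Real.exp (-2 * |v|) : ℂ) * Complex.exp (Complex.I * δ * v)) := by
  refine Integrable.mono' integrable_exp_neg_two_abs ?_ ?_
  · refine (Continuous.mul ?_ ?_).aestronglyMeasurable
    · fun_prop
    · exact Complex.continuous_exp.comp (by fun_prop)
  · filter_upwards with v
    have h1 : ‖(Real.exp (-2 * |v|) : ℂ) * Complex.exp (Complex.I * δ * v)‖
        = Real.exp (-2 * |v|) * ‖Complex.exp (Complex.I * δ * v)‖ := by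
      rw [norm_mul, Complex.norm_real, Real.norm_eq_abs,
        _root_.abs_of_nonneg (Real.exp_nonneg _)]
    rw [h1, Complex.norm_exp]
    have h2 : (Complex.I * δ * v).re = 0 := by simp
    rw [h2, Real.exp_zero, mul_one]

lemma key_integral {ι : Type*} (s : Finset ι) (c : ι → ℂ) (g : ι → ℝ) (w₀ : ℝ) :
    ∫ v : ℝ, (Real.exp (-2 * |v|) : ℂ) *
      ((∑ i ∈ s, c i * Complex.exp (Complex.I * (g i) * ((w₀ + v : ℝ) : ℂ))) *
       (starRingEnd ℂ) (∑ j ∈ s, c j * Complex.exp (Complex.I * (g j) * ((w₀ + v : ℝ) : ℂ)))) =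
    ∑ i ∈ s, ∑ j ∈ s, c i * (starRingEnd ℂ) (c j) *
      Complex.exp (Complex.I * ((g i - g j : ℝ) : ℂ) * w₀) * ((Wt (g i - g j) : ℝ) : ℂ) := by
  have hpt : ∀ v : ℝ, (Real.exp (-2 * |v|) : ℂ) *
      ((∑ i ∈ s, c i * Complex.exp (Complex.I * (g i) * ((w₀ + v : ℝ) : ℂ))) *
       (starRingEnd ℂ) (∑ j ∈ s, c j * Complex.exp (Complex.I * (g j) * ((w₀ + v : ℝ) : ℂ)))) =
      ∑ i ∈ s, ∑ j ∈ s, (c i * (starRingEnd ℂ) (c j) *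
        Complex.exp (Complex.I * ((g i - g j : ℝ) : ℂ) * w₀)) *
        ((Real.exp (-2 * |v|) : ℂ) * Complex.exp (Complex.I * ((g i - g j : ℝ) : ℂ) * v)) := by
    intro v
    rw [map_sum, Finset.sum_mul_sum, Finset.mul_sum]
    refine Finset.sum_congr rfl fun i _ => ?_
    rw [Finset.mul_sum]
    refine Finset.sum_congr rfl fun j _ => ?_
    have h := exp_combine (g i) (g j) w₀ v
    rw [map_mul]
    linear_combination ((Real.exp (-2 * |v|) : ℂ) * (c i * (starRingEnd ℂ) (c j))) * h
  calc ∫ v : ℝ, (Real.exp (-2 * |v|) : ℂ) *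
      ((∑ i ∈ s, c i * Complex.exp (Complex.I * (g i) * ((w₀ + v : ℝ) : ℂ))) *
       (starRingEnd ℂ) (∑ j ∈ s, c j * Complex.exp (Complex.I * (g j) * ((w₀ + v : ℝ) : ℂ))))
      = ∫ v : ℝ, ∑ i ∈ s, ∑ j ∈ s, (c i * (starRingEnd ℂ) (c j) *
        Complex.exp (Complex.I * ((g i - g j : ℝ) : ℂ) * w₀)) *
        ((Real.exp (-2 * |v|) : ℂ) * Complex.exp (Complex.I * ((g i - g j : ℝ) : ℂ) * v)) := by
        congr 1; funext v; exact hpt v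
    _ = ∑ i ∈ s, ∫ v : ℝ, ∑ j ∈ s, (c i * (starRingEnd ℂ) (c j) *
        Complex.exp (Complex.I * ((g i - g j : ℝ) : ℂ) * w₀)) *
        ((Real.exp (-2 * |v|) : ℂ) * Complex.exp (Complex.I * ((g i - g j : ℝ) : ℂ) * v)) := by
        refine integral_finset_sum s fun i _ => ?_
        exact integrable_finset_sum s fun j _ => (base_integrable _).const_mul _
    _ = ∑ i ∈ s, ∑ j ∈ s, c i * (starRingEnd ℂ) (c j) *
        Complex.exp (Complex.I * ((g i - g j : ℝ) : ℂ) * w₀) * ((Wt (g i - g j) : ℝ) : ℂ) := by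
        refine Finset.sum_congr rfl fun i _ => ?_
        rw [integral_finset_sum s fun j _ => (base_integrable _).const_mul _]
        refine Finset.sum_congr rfl fun j _ => ?_
        rw [integral_const_mul, integral_exp_abs_cexp, mul_assoc]

end Helpers

/-- Theorem: under GRH, `∫_{x}^{2x} |Σ(t,U,0)|² dt ≤ C x F_q(x,U)`. -/
theorem statement17 (hGRH : GRH) :
    ∃ C > 0, ∀ q : ℕ, 1 ≤ q → ∀ a : ℕ, Nat.gcd a q = 1 →
      ∀ x : ℝ, 2 ≤ x → ∀ U : ℝ, 0 ≤ U →
      (∫ t in x..(2 * x), ‖Sig q a t U 0‖ ^ 2) ≤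
        C * x * ‖Fq q a x U‖ := by
  refine ⟨8, by norm_num, ?_⟩
  intro q hq a ha x hx U hU
  have hq0 : q ≠ 0 := by omega
  haveI : NeZero q := ⟨hq0⟩
  letI : Fintype (DirichletCharacter ℂ q) := Fintype.ofFinite _
  have hx0 : (0:ℝ) < x := by linarith
  set T : DirichletCharacter ℂ q → Finset ℝ := fun χ => (finite_supp χ U).toFinset with hT
  have hmemT : ∀ χ γ, γ ∈ T χ ↔ (|γ| ≤ U ∧ zmult χ γ ≠ 0) := fun χ γ =>
    Set.Finite.mem_toFinset _
  -- flattened index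
  set σ : Finset ((_ : DirichletCharacter ℂ q) × ℝ) :=
    (Finset.univ : Finset (DirichletCharacter ℂ q)).sigma (fun χ => T χ) with hσ
  set c : ((_ : DirichletCharacter ℂ q) × ℝ) → ℂ :=
    fun p => (starRingEnd ℂ) (p.1 (a : ZMod q)) * ((zmult p.1 p.2 : ℕ) : ℂ) with hc
  set E : ℝ → ℂ := fun w => ∑ p ∈ σ, c p * Complex.exp (Complex.I * (p.2 : ℂ) * (w : ℂ))
    with hE
  -- (1) Sig at v = 0
  have hSig : ∀ t : ℝ, 0 < t → Sig q a t U 0 = E (Real.log t) := by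
    intro t ht
    have ht0 : (t : ℂ) ≠ 0 := by exact_mod_cast ht.ne'
    rw [Sig, dif_neg hq0, hE]
    simp only [hσ, Finset.sum_sigma]
    refine Finset.sum_congr rfl fun χ _ => ?_
    rw [tsum_eq_sum (s := T χ) ?_, Finset.mul_sum]
    · refine Finset.sum_congr rfl fun γ hγ => ?_
      rw [if_pos ((hmemT χ γ).mp hγ).1]
      simp only [hc]
      rw [Complex.cpow_def_of_ne_zero ht0, ← Complex.ofReal_log ht.le]
      rw [show Complex.I * ((0:ℝ):ℂ) * (γ:ℂ) = 0 by simp, Complex.exp_zero, mul_one]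
      rw [show ((Real.log t : ℝ) : ℂ) * (Complex.I * (γ:ℂ)) = Complex.I * (γ:ℂ) * ((Real.log t : ℝ):ℂ) from by ring]
      ring
    · intro γ hγ
      by_cases h : |γ| ≤ U
      · have hz : zmult χ γ = 0 := by
          by_contra hne; exact hγ ((hmemT χ γ).mpr ⟨h, hne⟩)
        simp [hz]
      · simp [h]
  -- (2) Gpair as finite sum
  have hG : ∀ χ₁ χ₂ : DirichletCharacter ℂ q, Gpair χ₁ χ₂ x U =
      ∑ γ₁ ∈ T χ₁, ∑ γ₂ ∈ T χ₂, ((zmult χ₁ γ₁ * zmult χ₂ γ₂ : ℕ) : ℂ) *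
        Complex.exp (Complex.I * ((γ₁ - γ₂ : ℝ) : ℂ) * ((Real.log x : ℝ) : ℂ)) *
        ((Wt (γ₁ - γ₂) : ℝ) : ℂ) := by
    intro χ₁ χ₂
    rw [Gpair, tsum_eq_sum (s := (T χ₁) ×ˢ (T χ₂)) ?_]
    · rw [Finset.sum_product]
      refine Finset.sum_congr rfl fun γ₁ h₁ => Finset.sum_congr rfl fun γ₂ h₂ => ?_
      rw [if_pos ⟨((hmemT χ₁ γ₁).mp h₁).1, ((hmemT χ₂ γ₂).mp h₂).1⟩]
      rw [Complex.cpow_def_of_ne_zero (by exact_mod_cast hx0.ne'), ← Complex.ofReal_log hx0.le]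
      congr 2
      ring
    · intro p hp
      by_cases h : |p.1| ≤ U ∧ |p.2| ≤ U
      · rw [if_pos h]
        rw [Finset.mem_product, not_and_or] at hp
        rcases hp with h1 | h2
        · have : zmult χ₁ p.1 = 0 := by
            by_contra hne; exact h1 ((hmemT χ₁ p.1).mpr ⟨h.1, hne⟩)
          simp [this]
        · have : zmult χ₂ p.2 = 0 := by
            by_contra hne; exact h2 ((hmemT χ₂ p.2).mpr ⟨h.2, hne⟩)
          simp [this]
      · rw [if_neg h]
  -- (3) Fq as flattened double sum
  have hFq : Fq q a x U = ∑ p ∈ σ, ∑ p' ∈ σ, c p * (starRingEnd ℂ) (c p') *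
      Complex.exp (Complex.I * ((p.2 - p'.2 : ℝ) : ℂ) * ((Real.log x : ℝ) : ℂ)) *
      ((Wt (p.2 - p'.2) : ℝ) : ℂ) := by
    rw [Fq, dif_neg hq0]
    simp only [hσ, Finset.sum_sigma]
    refine Finset.sum_congr rfl fun χ₁ _ => ?_
    rw [Finset.sum_comm]
    refine Finset.sum_congr rfl fun χ₂ _ => ?_
    rw [hG χ₁ χ₂, Finset.mul_sum]
    refine Finset.sum_congr rfl fun γ₁ _ => ?_
    rw [Finset.mul_sum]
    refine Finset.sum_congr rfl fun γ₂ _ => ?_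
    simp only [hc, map_mul, Complex.conj_conj, map_natCast]
    try push_cast
    try ring
  -- (4) Fq as an integral
  have hFqInt : Fq q a x U = ∫ v : ℝ, (Real.exp (-2 * |v|) : ℂ) *
      (E (Real.log x + v) * (starRingEnd ℂ) (E (Real.log x + v))) := by
    rw [hFq, ← key_integral σ c (fun p => p.2) (Real.log x)]
    try simp only [hE]
  -- (5) real form
  set ψ : ℝ → ℝ := fun w => ‖E w‖ ^ 2 with hψ
  set φ : ℝ → ℝ := fun v => Real.exp (-2 * |v|) * ψ (Real.log x + v) with hφ
  have hψ0 : ∀ w, 0 ≤ ψ w := fun w => by rw [hψ]; positivity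
  have hφ0 : ∀ v, 0 ≤ φ v := fun v => mul_nonneg (Real.exp_nonneg _) (hψ0 _)
  have hFqreal : Fq q a x U = ((∫ v : ℝ, φ v : ℝ) : ℂ) := by
    have hpt : (fun v : ℝ => (Real.exp (-2 * |v|) : ℂ) *
        (E (Real.log x + v) * (starRingEnd ℂ) (E (Real.log x + v))))
        = fun v : ℝ => ((φ v : ℝ) : ℂ) := by
      funext v
      rw [Complex.mul_conj, ← Complex.sq_norm]
      simp only [hφ, hψ]
      push_cast
      ring
    rw [hFqInt, hpt]
    exact integral_ofReal
  have hAbsFq : ‖Fq q a x U‖ = ∫ v : ℝ, φ v := by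
    rw [hFqreal, Complex.norm_real, Real.norm_eq_abs, _root_.abs_of_nonneg (integral_nonneg hφ0)]
  -- continuity and bounds
  have hcontE : Continuous E := by
    rw [hE]
    exact continuous_finset_sum _ fun p _ =>
      continuous_const.mul (Complex.continuous_exp.comp (by fun_prop))
  have hcontψ : Continuous ψ := by
    rw [hψ]; exact (continuous_norm.comp hcontE).pow 2
  have hcontφ : Continuous φ := by
    rw [hφ]
    exact (Real.continuous_exp.comp (by fun_prop)).mul (hcontψ.comp (by fun_prop))
  set B : ℝ := ∑ p ∈ σ, ‖c p‖ with hBdef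
  have hEB : ∀ w, ‖E w‖ ≤ B := by
    intro w
    rw [hE, hBdef]
    refine le_trans (norm_sum_le _ _) (le_of_eq (Finset.sum_congr rfl fun p _ => ?_))
    rw [norm_mul, Complex.norm_exp]
    have : (Complex.I * (p.2 : ℂ) * (w : ℂ)).re = 0 := by simp
    rw [this, Real.exp_zero, mul_one]
  have hφle : ∀ v, φ v ≤ B ^ 2 * Real.exp (-2 * |v|) := by
    intro v
    rw [hφ, hψ, mul_comm (B ^ 2)]
    exact mul_le_mul_of_nonneg_left
      (pow_le_pow_left₀ (norm_nonneg _) (hEB _) 2) (Real.exp_nonneg _)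
  have hφint : Integrable φ := by
    refine Integrable.mono' (integrable_exp_neg_two_abs.const_mul (B ^ 2))
      hcontφ.aestronglyMeasurable ?_
    filter_upwards with v
    rw [Real.norm_eq_abs, _root_.abs_of_nonneg (hφ0 v)]
    exact hφle v
  -- (7) chain of inequalities on the LHS
  have hxx : x ≤ 2 * x := by linarith
  have huIcc : Set.uIcc x (2 * x) = Set.Icc x (2 * x) := Set.uIcc_of_le hxx
  have hlog2x : Real.log (2 * x) = Real.log x + Real.log 2 := by
    rw [Real.log_mul two_ne_zero hx0.ne']; ring
  have step1 : (∫ t in x..(2 * x), ‖Sig q a t U 0‖ ^ 2)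
      = ∫ t in x..(2 * x), ψ (Real.log t) := by
    refine intervalIntegral.integral_congr fun t ht => ?_
    rw [huIcc] at ht
    have ht0 : (0:ℝ) < t := by linarith [ht.1]
    rw [hSig t ht0]
  have step2 : (∫ t in x..(2 * x), ψ (Real.log t))
      = ∫ u in Real.log x..Real.log (2 * x), Real.exp u * ψ u := by
    have h1 : ∀ t ∈ Set.uIcc x (2 * x), HasDerivAt Real.log t⁻¹ t := by
      intro t ht
      rw [huIcc] at ht
      exact Real.hasDerivAt_log (by linarith [ht.1])
    have h2 : ContinuousOn (fun t : ℝ => t⁻¹) (Set.uIcc x (2 * x)) := by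
      refine ContinuousOn.inv₀ continuousOn_id fun t ht => ?_
      rw [huIcc] at ht
      intro h0
      rw [h0] at ht
      linarith [ht.1]
    have h3 : Continuous (fun u : ℝ => Real.exp u * ψ u) := Real.continuous_exp.mul hcontψ
    have hcv := intervalIntegral.integral_comp_smul_deriv h1 h2 h3
    rw [← hcv]
    refine intervalIntegral.integral_congr fun t ht => ?_
    rw [huIcc] at ht
    have ht0 : (0:ℝ) < t := by linarith [ht.1]
    simp only [smul_eq_mul, Function.comp_apply]
    rw [Real.exp_log ht0]
    field_simp
    try ring
  have hloglog : Real.log x ≤ Real.log (2 * x) := by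
    rw [hlog2x]
    nlinarith [Real.log_nonneg (show (1:ℝ) ≤ 2 by norm_num)]
  have step3 : (∫ u in Real.log x..Real.log (2 * x), Real.exp u * ψ u)
      ≤ (2 * x) * ∫ u in Real.log x..Real.log (2 * x), ψ u := by
    rw [← intervalIntegral.integral_const_mul]
    refine intervalIntegral.integral_mono_on hloglog
      ((Real.continuous_exp.mul hcontψ).intervalIntegrable _ _)
      ((continuous_const.mul hcontψ).intervalIntegrable _ _) fun u hu => ?_
    have : Real.exp u ≤ 2 * x := by
      calc Real.exp u ≤ Real.exp (Real.log (2 * x)) := Real.exp_le_exp.mpr hu.2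
        _ = 2 * x := Real.exp_log (by linarith)
    exact mul_le_mul_of_nonneg_right this (hψ0 u)
  have step4 : (∫ u in Real.log x..Real.log (2 * x), ψ u)
      = ∫ v in (0:ℝ)..Real.log 2, ψ (Real.log x + v) := by
    rw [intervalIntegral.integral_comp_add_left ψ (Real.log x), add_zero, ← hlog2x]
  have hexplog2 : Real.exp (-2 * Real.log 2) = 1 / 4 := by
    rw [show (-2 : ℝ) * Real.log 2 = -(Real.log 2 + Real.log 2) by ring, Real.exp_neg,
      Real.exp_add, Real.exp_log two_pos]
    norm_num
  have hlog2nn : (0:ℝ) ≤ Real.log 2 := Real.log_nonneg (by norm_num)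
  have step5 : (∫ v in (0:ℝ)..Real.log 2, ψ (Real.log x + v))
      ≤ 4 * ∫ v in (0:ℝ)..Real.log 2, φ v := by
    rw [← intervalIntegral.integral_const_mul]
    refine intervalIntegral.integral_mono_on hlog2nn
      ((hcontψ.comp (by fun_prop)).intervalIntegrable _ _)
      ((continuous_const.mul hcontφ).intervalIntegrable _ _) fun v hv => ?_
    have habs : |v| = v := _root_.abs_of_nonneg hv.1
    have h14 : (1:ℝ) / 4 ≤ Real.exp (-2 * |v|) := by
      rw [habs, ← hexplog2]
      exact Real.exp_le_exp.mpr (by nlinarith [hv.2])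
    have := mul_le_mul_of_nonneg_right h14 (hψ0 (Real.log x + v))
    calc ψ (Real.log x + v) = 4 * ((1:ℝ)/4 * ψ (Real.log x + v)) := by ring
      _ ≤ 4 * (Real.exp (-2 * |v|) * ψ (Real.log x + v)) := by linarith
      _ = 4 * φ v := by rw [hφ]
  have step6 : (∫ v in (0:ℝ)..Real.log 2, φ v) ≤ ∫ v : ℝ, φ v := by
    rw [intervalIntegral.integral_of_le hlog2nn]
    exact setIntegral_le_integral hφint (Filter.Eventually.of_forall hφ0)
  have hψint_nonneg : (0:ℝ) ≤ ∫ u in Real.log x..Real.log (2 * x), ψ u := by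
    rw [step4]
    exact intervalIntegral.integral_nonneg hlog2nn fun v _ => hψ0 _
  calc (∫ t in x..(2 * x), ‖Sig q a t U 0‖ ^ 2)
      = ∫ u in Real.log x..Real.log (2 * x), Real.exp u * ψ u := by rw [step1, step2]
    _ ≤ (2 * x) * ∫ u in Real.log x..Real.log (2 * x), ψ u := step3
    _ = (2 * x) * ∫ v in (0:ℝ)..Real.log 2, ψ (Real.log x + v) := by rw [step4]
    _ ≤ (2 * x) * (4 * ∫ v in (0:ℝ)..Real.log 2, φ v) := by
        refine mul_le_mul_of_nonneg_left step5 (by linarith)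
    _ ≤ (2 * x) * (4 * ∫ v : ℝ, φ v) := by
        refine mul_le_mul_of_nonneg_left (by linarith [step6]) (by linarith)
    _ = 8 * x * ‖Fq q a x U‖ := by rw [hAbsFq]; ring
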